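/- Let Q be a quantum matrix of size 6 satisfying Q i 5 = 1 for all i ∈ Fin 6, and suppose that for each triple {i,j,k} (with i < j < k) in the list {0,1,2}, {1,2,3}, {2,3,4}, {0,3,4}, {0,1,4}, {0,2,5}, {1,3,5}, {2,4,5}, {0,3,5}, {1,4,5} the relation Q i k = Q i j · Q j k holds. Then, setting a = Q 0 1, one has Q 0 2 = Q 1 3 = Q 2 4 = Q 0 3 = Q 1 4 = 1, Q 2 3 = a, Q 1 2 = Q 3 4 = Q 0 4 = a⁻¹, and a² = 1. In particular there are exactly two such matrices Q, corresponding to a = 1 and a = −1. -/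
import Mathlib


/-- A quantum matrix of size `m`: all entries nonzero, diagonal entries `1`,
and `Q i j * Q j i = 1` for all `i, j`. -/
def IsQuantumMatrix {m : ℕ} (Q : Matrix (Fin m) (Fin m) ℂ) : Prop :=
  (∀ i j, Q i j ≠ 0) ∧ (∀ i, Q i i = 1) ∧ (∀ i j, Q i j * Q j i = 1)

/-- The hypotheses of the statement: `Q` is a quantum matrix of size 6 with
`Q i 5 = 1` for all `i`, satisfying the rank-one relation `Q i k = Q i j * Q j k`
for each triple `{i,j,k}` (with `i < j < k`) in the list
`{0,1,2}, {1,2,3}, {2,3,4}, {0,3,4}, {0,1,4}, {0,2,5}, {1,3,5}, {2,4,5},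
{0,3,5}, {1,4,5}`. -/
def Hyp (Q : Matrix (Fin 6) (Fin 6) ℂ) : Prop :=
  IsQuantumMatrix Q ∧ (∀ i : Fin 6, Q i 5 = 1) ∧
  Q 0 2 = Q 0 1 * Q 1 2 ∧
  Q 1 3 = Q 1 2 * Q 2 3 ∧
  Q 2 4 = Q 2 3 * Q 3 4 ∧
  Q 0 4 = Q 0 3 * Q 3 4 ∧
  Q 0 4 = Q 0 1 * Q 1 4 ∧
  Q 0 5 = Q 0 2 * Q 2 5 ∧
  Q 1 5 = Q 1 3 * Q 3 5 ∧
  Q 2 5 = Q 2 4 * Q 4 5 ∧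
  Q 0 5 = Q 0 3 * Q 3 5 ∧
  Q 1 5 = Q 1 4 * Q 4 5

lemma cons_val_five {α : Type*} (a b c d e f : α) : ![a,b,c,d,e,f] 5 = f := rfl
lemma cons5 {α : Type*} (a : α) (f : Fin 5 → α) : Matrix.vecCons a f 5 = f 4 := rfl
lemma cons4 {α : Type*} (a : α) (f : Fin 4 → α) : Matrix.vecCons a f 4 = f 3 := rfl
lemma cons3 {α : Type*} (a : α) (f : Fin 3 → α) : Matrix.vecCons a f 3 = f 2 := rfl
lemma cons2 {α : Type*} (a : α) (f : Fin 2 → α) : Matrix.vecCons a f 2 = f 1 := rfl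

noncomputable def Mq (a : ℂ) : Matrix (Fin 6) (Fin 6) ℂ :=
  !![1,a,1,1,a,1; a,1,a,1,1,1; 1,a,1,a,1,1; 1,1,a,1,a,1; a,1,1,a,1,1; 1,1,1,1,1,1]

lemma hyp_Mq (a : ℂ) (ha : a ^ 2 = 1) : Hyp (Mq a) := by
  have h2 : a * a = 1 := by rw [← sq]; exact ha
  have h0 : a ≠ 0 := by rintro rfl; simp at h2
  refine ⟨⟨?_, ?_, ?_⟩, ?_, ?_, ?_, ?_, ?_, ?_, ?_, ?_, ?_, ?_, ?_⟩
  · intro i j; fin_cases i <;> fin_cases j <;> simp [Mq, cons_val_five, cons5, cons4, cons3, cons2, Matrix.vecHead, Matrix.vecTail] <;> exact h0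
  · intro i; fin_cases i <;> simp [Mq, cons_val_five, cons5, cons4, cons3, cons2, Matrix.vecHead, Matrix.vecTail]
  · intro i j; fin_cases i <;> fin_cases j <;> simp [Mq, h2, cons_val_five, cons5, cons4, cons3, cons2, Matrix.vecHead, Matrix.vecTail]
  · intro i; fin_cases i <;> simp [Mq, cons_val_five, cons5, cons4, cons3, cons2, Matrix.vecHead, Matrix.vecTail]
  all_goals simp [Mq, h2, cons_val_five, cons5, cons4, cons3, cons2, Matrix.vecHead, Matrix.vecTail]

lemma key (Q : Matrix (Fin 6) (Fin 6) ℂ) (h : Hyp Q) :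
    Q 0 2 = 1 ∧ Q 1 3 = 1 ∧ Q 2 4 = 1 ∧ Q 0 3 = 1 ∧ Q 1 4 = 1 ∧
    Q 2 3 = Q 0 1 ∧ Q 1 2 = (Q 0 1)⁻¹ ∧ Q 3 4 = (Q 0 1)⁻¹ ∧
    Q 0 4 = (Q 0 1)⁻¹ ∧ (Q 0 1) ^ 2 = 1 ∧ Q = Mq (Q 0 1) := by
  obtain ⟨⟨hnz, hdiag, hinvp⟩, h5, r02, r13, r24, r034, r014, r025, r135, r245, r035, r145⟩ := h
  set a := Q 0 1 with ha
  have ha0 : a ≠ 0 := hnz 0 1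
  have e02 : Q 0 2 = 1 := by have := r025; rw [h5 0, h5 2] at this; linear_combination -this
  have e13 : Q 1 3 = 1 := by have := r135; rw [h5 1, h5 3] at this; linear_combination -this
  have e24 : Q 2 4 = 1 := by have := r245; rw [h5 2, h5 4] at this; linear_combination -this
  have e03 : Q 0 3 = 1 := by have := r035; rw [h5 0, h5 3] at this; linear_combination -this
  have e14 : Q 1 4 = 1 := by have := r145; rw [h5 1, h5 4] at this; linear_combination -this
  have e12 : Q 1 2 = a⁻¹ := by
    rw [e02] at r02; field_simp; linear_combination -r02
  have e23 : Q 2 3 = a := by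
    rw [e13, e12] at r13
    have : a⁻¹ * a = 1 := inv_mul_cancel₀ ha0
    field_simp at r13 ⊢
    linear_combination -r13
  have e34 : Q 3 4 = a⁻¹ := by
    rw [e24, e23] at r24; field_simp; linear_combination -r24
  have e04 : Q 0 4 = a⁻¹ := by rw [r034, e03, e34, one_mul]
  have e04' : Q 0 4 = a := by rw [r014, e14, mul_one]
  have hainv : a⁻¹ = a := by rw [← e04, e04']
  have hsq : a ^ 2 = 1 := by
    have := mul_inv_cancel₀ ha0
    rw [hainv] at this; rw [sq]; exact this
  have h2 : a * a = 1 := by rw [← sq]; exact hsq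
  -- inverses
  have inv1 : ∀ i j : Fin 6, Q i j = 1 → Q j i = 1 := by
    intro i j hij; have := hinvp i j; rw [hij, one_mul] at this; exact this
  have inva : ∀ i j : Fin 6, Q i j = a → Q j i = a := by
    intro i j hij; have := hinvp i j; rw [hij] at this
    have : Q j i = a⁻¹ := by field_simp; linear_combination this
    rw [hainv] at this; exact this
  refine ⟨e02, e13, e24, e03, e14, by rw [e23], e12, e34, e04, hsq, ?_⟩
  have e12' : Q 1 2 = a := by rw [e12, hainv]
  have e34' : Q 3 4 = a := by rw [e34, hainv]
  have e04'' : Q 0 4 = a := e04'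
  ext i j
  fin_cases i <;> fin_cases j <;>
    simp [Mq, cons_val_five, cons5, cons4, cons3, cons2, Matrix.vecHead, Matrix.vecTail] <;>
    first
      | exact hdiag _
      | exact h5 _
      | exact e02 | exact e13 | exact e24 | exact e03 | exact e14
      | exact e23 | exact e12' | exact e34' | exact e04''
      | rfl
      | exact inv1 _ _ (h5 _)
      | exact inv1 _ _ e02 | exact inv1 _ _ e13 | exact inv1 _ _ e24
      | exact inv1 _ _ e03 | exact inv1 _ _ e14
      | exact inva _ _ rfl | exact inva _ _ e23 | exact inva _ _ e12'
      | exact inva _ _ e34' | exact inva _ _ e04''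

theorem stmt_17 :
    (∀ Q : Matrix (Fin 6) (Fin 6) ℂ, Hyp Q →
      Q 0 2 = 1 ∧ Q 1 3 = 1 ∧ Q 2 4 = 1 ∧ Q 0 3 = 1 ∧ Q 1 4 = 1 ∧
      Q 2 3 = Q 0 1 ∧ Q 1 2 = (Q 0 1)⁻¹ ∧ Q 3 4 = (Q 0 1)⁻¹ ∧
      Q 0 4 = (Q 0 1)⁻¹ ∧ (Q 0 1) ^ 2 = 1) ∧
    Nat.card {Q : Matrix (Fin 6) (Fin 6) ℂ // Hyp Q} = 2 := by
  constructor
  · intro Q hQ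
    obtain ⟨h1, h2, h3, h4, h5, h6, h7, h8, h9, h10, _⟩ := key Q hQ
    exact ⟨h1, h2, h3, h4, h5, h6, h7, h8, h9, h10⟩
  · have hset : {Q : Matrix (Fin 6) (Fin 6) ℂ | Hyp Q} = {Mq 1, Mq (-1)} := by
      ext Q
      simp only [Set.mem_setOf_eq, Set.mem_insert_iff, Set.mem_singleton_iff]
      constructor
      · intro hQ
        obtain ⟨_, _, _, _, _, _, _, _, _, hsq, hM⟩ := key Q hQ
        have : Q 0 1 = 1 ∨ Q 0 1 = -1 := by
          have : (Q 0 1 - 1) * (Q 0 1 + 1) = 0 := by ring_nf; linear_combination hsq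
          rcases mul_eq_zero.mp this with h | h
          · left; linear_combination h
          · right; linear_combination h
        rcases this with h | h
        · left; rw [hM, h]
        · right; rw [hM, h]
      · rintro (rfl | rfl)
        · exact hyp_Mq 1 (by norm_num)
        · exact hyp_Mq (-1) (by norm_num)
    have hne : Mq 1 ≠ Mq (-1) := by
      intro h
      have := congrFun (congrFun h 0) 1
      simp [Mq] at this
      norm_num at this
    calc Nat.card {Q : Matrix (Fin 6) (Fin 6) ℂ // Hyp Q}
        = ({Q : Matrix (Fin 6) (Fin 6) ℂ | Hyp Q} : Set _).ncard := (Nat.card_coe_set_eq _).symm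
      _ = ({Mq 1, Mq (-1)} : Set _).ncard := by rw [hset]
      _ = 2 := Set.ncard_pair hne
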